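/- arXiv:2010.05678 — 2 statements merged into one kernel-verified Lean document; each statement's English description precedes it below -/
import Mathlib

section
/- Let p be a prime and H_p the Heisenberg group of order p^3 (upper-triangular unipotent 3×3 matrices over ZMod p). Every complex irreducible representation of H_p has dimension either 1 or p. -/
open Matrix

/-- The matrix [[1,a,c],[0,1,b],[0,0,1]]. -/
def heisMat (p : ℕ) (a b c : ZMod p) : Matrix (Fin 3) (Fin 3) (ZMod p) :=
  !![1, a, c; 0, 1, b; 0, 0, 1]

/-- The Heisenberg group mod `p`, as a subgroup of `GL₃(ZMod p)`. -/
def Heis (p : ℕ) : Subgroup (GL (Fin 3) (ZMod p)) where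
  carrier := {g | ∃ a b c : ZMod p,
    (g : Matrix (Fin 3) (Fin 3) (ZMod p)) = heisMat p a b c}
  one_mem' := ⟨0, 0, 0, by simp [heisMat, Matrix.one_fin_three]⟩
  mul_mem' := by
    rintro x y ⟨a, b, c, hx⟩ ⟨a', b', c', hy⟩
    refine ⟨a + a', b + b', c + c' + a * b', ?_⟩
    rw [Units.val_mul, hx, hy]
    ext i j
    fin_cases i <;> fin_cases j <;>
      simp [heisMat, Matrix.mul_apply, Fin.sum_univ_three, Matrix.vecHead, Matrix.vecTail] <;> ring
  inv_mem' := by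
    rintro x ⟨a, b, c, hx⟩
    refine ⟨-a, -b, a * b - c, ?_⟩
    have h1 : (x : Matrix (Fin 3) (Fin 3) (ZMod p)) * heisMat p (-a) (-b) (a * b - c) = 1 := by
      rw [hx]
      ext i j
      fin_cases i <;> fin_cases j <;>
        simp [heisMat, Matrix.mul_apply, Fin.sum_univ_three, Matrix.one_apply, Matrix.vecHead, Matrix.vecTail] <;> ring
    calc ((x⁻¹ : GL (Fin 3) (ZMod p)) : Matrix (Fin 3) (Fin 3) (ZMod p))
        = ↑x⁻¹ * 1 := by rw [mul_one]
      _ = ↑x⁻¹ * (↑x * heisMat p (-a) (-b) (a * b - c)) := by rw [h1]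
      _ = (↑x⁻¹ * ↑x) * heisMat p (-a) (-b) (a * b - c) := by rw [mul_assoc]
      _ = heisMat p (-a) (-b) (a * b - c) := by rw [Units.inv_mul, one_mul]

/-!
The central element `z = mk 0 0 1` acts on an irreducible representation by a scalar `c`
(Schur), and `c ^ p = 1`. If `c = 1`, the images of `x = mk 1 0 0` and `y = mk 0 1 0` commute,
so every generator acts by a scalar and the representation is a line. Otherwise `c` is a
primitive `p`-th root of unity and `ρ x * ρ y = c • (ρ y * ρ x)`. For an eigenvector `v` of `ρ x`
with eigenvalue `μ`, the vectors `ρ y ^ i v` (`i < p`) are eigenvectors of `ρ x` for the distinct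
eigenvalues `c ^ i * μ`, and they span a `p`-dimensional invariant subspace, which is everything
by irreducibility.
-/

open CategoryTheory Module

theorem mul_pow_eq_smul_pow_mul {R A : Type*} [CommSemiring R] [Semiring A] [Algebra R A]
    {X Y : A} {c : R} (h : X * Y = c • (Y * X)) (n : ℕ) : X * Y ^ n = c ^ n • (Y ^ n * X) := by
  induction n with
  | zero => simp
  | succ n ih =>
    rw [pow_succ, ← mul_assoc, ih, smul_mul_assoc, mul_assoc, h, mul_smul_comm, smul_smul,
      ← mul_assoc, ← pow_succ, ← pow_succ]

namespace Module.End

variable {K V : Type*} [Field K] [AddCommGroup V] [Module K V]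

theorem mem_invtSubmodule_algebraMap (W : Submodule K V) (c : K) :
    W ∈ (algebraMap K (End K V) c).invtSubmodule :=
  fun _ hw ↦ W.smul_mem c hw

theorem exists_finrank_eq_of_mul_eq_smul_mul [IsAlgClosed K] [FiniteDimensional K V]
    [Nontrivial V] {p : ℕ} [NeZero p] {X Y : End K V} {c : K} (hc : IsPrimitiveRoot c p)
    (hX : X ^ p = 1) (hY : Y ^ p = 1) (hXY : X * Y = c • (Y * X)) :
    ∃ W : Submodule K V, finrank K W = p ∧ W ∈ X.invtSubmodule ∧ W ∈ Y.invtSubmodule := by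
  obtain ⟨μ, hμ⟩ := X.exists_eigenvalue
  obtain ⟨v, hv⟩ := hμ.exists_hasEigenvector
  have hμ0 : μ ≠ 0 := by
    rintro rfl
    have := hv.pow_apply p
    rw [hX, zero_pow (NeZero.ne p), zero_smul, one_apply] at this
    exact hv.2 this
  let w : Fin p → V := fun i ↦ (Y ^ (i : ℕ)) v
  have hw : ∀ i : Fin p, X.HasEigenvector (c ^ (i : ℕ) * μ) (w i) := fun i ↦ by
    refine ⟨mem_eigenspace_iff.mpr ?_, fun h0 ↦ hv.2 ?_⟩
    · rw [← mul_apply, mul_pow_eq_smul_pow_mul hXY, LinearMap.smul_apply, mul_apply,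
        hv.apply_eq_smul, map_smul, smul_smul]
    · have := congrArg (Y ^ (p - i)) h0
      rwa [map_zero, ← mul_apply, ← pow_add, Nat.sub_add_cancel i.2.le, hY, one_apply] at this
  have hli : LinearIndependent K w := X.eigenvectors_linearIndependent' _
    (fun i j h ↦ Fin.ext (hc.pow_inj i.2 j.2 (mul_right_cancel₀ hμ0 h))) w hw
  have hYw : ∀ n : ℕ, (Y ^ n) v ∈ Submodule.span K (Set.range w) := fun n ↦ by
    rw [pow_eq_pow_mod n hY]
    exact Submodule.subset_span ⟨⟨n % p, Nat.mod_lt _ (NeZero.pos p)⟩, rfl⟩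
  refine ⟨Submodule.span K (Set.range w), by rw [finrank_span_eq_card hli, Fintype.card_fin],
    ?_, ?_⟩ <;> rw [mem_invtSubmodule_iff_map_le, Submodule.map_span_le] <;> rintro _ ⟨i, rfl⟩
  · rw [(hw i).apply_eq_smul]
    exact Submodule.smul_mem _ _ (Submodule.subset_span ⟨i, rfl⟩)
  · rw [← mul_apply, ← pow_succ']
    exact hYw _

end Module.End

theorem Representation.mem_invtSubmodule_of_closure_eq_top {k G V : Type*} [CommSemiring k]
    [Monoid G] [AddCommMonoid V] [Module k V] (ρ : Representation k G V) {S : Set G}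
    (hS : Submonoid.closure S = ⊤) {W : Submodule k V}
    (hW : ∀ s ∈ S, W ∈ End.invtSubmodule (ρ s)) : W ∈ ρ.invtSubmodule := by
  rw [Representation.mem_invtSubmodule]
  intro g
  induction (hS ▸ Submonoid.mem_top g : g ∈ Submonoid.closure S) using
    Submonoid.closure_induction with
  | mem s hs => exact hW s hs
  | one => rw [map_one]; exact fun _ hv ↦ hv
  | mul g h _ _ hg hh => rw [map_mul]; exact fun _ hv ↦ hg (hh hv)

namespace FDRep

variable {k G : Type*} [Field k] [Monoid G] (ρ : FDRep k G) [Simple ρ]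

theorem nontrivial_of_simple : Nontrivial ρ := by
  by_contra h
  rw [not_nontrivial_iff_subsingleton] at h
  exact id_nonzero ρ (by ext; exact Subsingleton.elim _ _)

theorem eq_bot_or_eq_top_of_mem_invtSubmodule {W : Submodule k ρ}
    (hW : W ∈ Representation.invtSubmodule ρ.ρ) : W = ⊥ ∨ W = ⊤ := by
  refine or_iff_not_imp_left.mpr fun hne ↦ ?_
  let σ : Subrepresentation ρ.ρ :=
    ⟨W, fun g _ hv ↦ (Representation.mem_invtSubmodule ρ.ρ).mp hW g hv⟩
  let ι : FDRep.of σ.toRepresentation ⟶ ρ := ⟨FGModuleCat.ofHom W.subtype, fun _ ↦ rfl⟩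
  have : Mono ι := ConcreteCategory.mono_of_injective ι Subtype.val_injective
  obtain ⟨w, hw, hw0⟩ := Submodule.exists_mem_ne_zero_of_ne_bot hne
  have hι : ι ≠ 0 := fun h ↦ hw0 congr(($h).hom ⟨w, hw⟩)
  have := isIso_of_mono_of_nonzero hι
  exact Submodule.eq_top_of_finrank_eq
    (FGModuleCat.isoToLinearEquiv ((Action.forget _ _).mapIso (asIso ι))).finrank_eq

theorem exists_eq_algebraMap_of_commute [IsAlgClosed k] {S : Set G}
    (hS : Submonoid.closure S = ⊤) {f : End k ρ} (hf : ∀ s ∈ S, Commute f (ρ.ρ s)) :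
    ∃ c : k, f = algebraMap k _ c := by
  have := nontrivial_of_simple ρ
  obtain ⟨μ, hμ⟩ := f.exists_eigenvalue
  have hinv : f.eigenspace μ ∈ Representation.invtSubmodule ρ.ρ :=
    Representation.mem_invtSubmodule_of_closure_eq_top ρ.ρ hS fun s hs ↦
      End.mapsTo_genEigenspace_of_comm (hf s hs) μ 1
  obtain hbot | htop := eq_bot_or_eq_top_of_mem_invtSubmodule ρ hinv
  · exact absurd hbot hμ
  · refine ⟨μ, LinearMap.ext fun v ↦ ?_⟩
    exact End.mem_eigenspace_iff.mp (htop ▸ Submodule.mem_top)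

theorem finrank_eq_one_of_commute [IsAlgClosed k] {S : Set G} (hS : Submonoid.closure S = ⊤)
    (h : ∀ s ∈ S, ∀ t ∈ S, Commute (ρ.ρ s) (ρ.ρ t)) : finrank k ρ = 1 := by
  have := nontrivial_of_simple ρ
  obtain ⟨v, hv⟩ := exists_ne (0 : ρ)
  have hinv : (k ∙ v) ∈ Representation.invtSubmodule ρ.ρ :=
    Representation.mem_invtSubmodule_of_closure_eq_top ρ.ρ hS fun s hs ↦ by
      obtain ⟨c, hc⟩ := exists_eq_algebraMap_of_commute ρ hS (h s hs)
      exact hc ▸ End.mem_invtSubmodule_algebraMap _ c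
  obtain hbot | htop := eq_bot_or_eq_top_of_mem_invtSubmodule ρ hinv
  · exact absurd (Submodule.span_singleton_eq_bot.mp hbot) hv
  · rw [← finrank_top, ← htop, finrank_span_singleton hv]

end FDRep

section heisMat

variable {p : ℕ}

theorem heisMat_mul_heisMat (a b c a' b' c' : ZMod p) :
    heisMat p a b c * heisMat p a' b' c' = heisMat p (a + a') (b + b') (c + c' + a * b') := by
  ext i j
  fin_cases i <;> fin_cases j <;> simp [heisMat, Matrix.mul_apply, Fin.sum_univ_three] <;> ring

theorem heisMat_zero : heisMat p 0 0 0 = 1 := by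
  ext i j
  fin_cases i <;> fin_cases j <;> simp [heisMat]

end heisMat

namespace Heis

variable {p : ℕ}

def mk (a b c : ZMod p) : Heis p :=
  ⟨⟨heisMat p a b c, heisMat p (-a) (-b) (a * b - c),
    by rw [heisMat_mul_heisMat, ← heisMat_zero]; ring_nf,
    by rw [heisMat_mul_heisMat, ← heisMat_zero]; ring_nf⟩, a, b, c, rfl⟩

theorem mk_mul_mk (a b c a' b' c' : ZMod p) :
    mk a b c * mk a' b' c' = mk (a + a') (b + b') (c + c' + a * b') :=
  Subtype.ext <| Units.ext <| heisMat_mul_heisMat a b c a' b' c'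

theorem mk_zero : mk (0 : ZMod p) 0 0 = 1 :=
  Subtype.ext <| Units.ext heisMat_zero

theorem exists_eq_mk (g : Heis p) : ∃ a b c, g = mk a b c := by
  obtain ⟨a, b, c, h⟩ := g.2
  exact ⟨a, b, c, Subtype.ext <| Units.ext h⟩

theorem mk_pow_of_mul_eq_zero {a b : ZMod p} (c : ZMod p) (hab : a * b = 0) (n : ℕ) :
    mk a b c ^ n = mk ((n : ZMod p) * a) (n * b) (n * c) := by
  induction n with
  | zero => simp [mk_zero]
  | succ n ih =>
    rw [pow_succ, ih, mk_mul_mk, mul_assoc, hab]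
    push_cast
    ring_nf

theorem mk_pow_eq_one_of_mul_eq_zero {a b : ZMod p} (c : ZMod p) (hab : a * b = 0) :
    mk a b c ^ p = 1 := by
  simp [mk_pow_of_mul_eq_zero c hab, mk_zero]

theorem mk_eq_pow_mul_pow_mul_pow [NeZero p] (a b c : ZMod p) :
    mk a b c = mk 1 0 0 ^ a.val * mk 0 1 0 ^ b.val * mk 0 0 1 ^ (c - a * b).val := by
  simp only [mk_pow_of_mul_eq_zero (a := (1 : ZMod p)) (b := 0) _ (mul_zero _),
    mk_pow_of_mul_eq_zero (a := (0 : ZMod p)) _ (zero_mul _),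
    ZMod.natCast_val, ZMod.cast_id', id, mk_mul_mk]
  ring_nf

theorem submonoid_closure_mk_eq_top [NeZero p] :
    Submonoid.closure {mk (1 : ZMod p) 0 0, mk 0 1 0, mk 0 0 1} = ⊤ := by
  refine (Submonoid.eq_top_iff' _).mpr fun g ↦ ?_
  obtain ⟨a, b, c, rfl⟩ := exists_eq_mk g
  rw [mk_eq_pow_mul_pow_mul_pow a b c]
  refine mul_mem (mul_mem ?_ ?_) ?_ <;> exact pow_mem (Submonoid.subset_closure (by simp)) _

theorem commute_mk_zero_zero (c : ZMod p) (g : Heis p) : Commute (mk 0 0 c) g := by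
  obtain ⟨a', b', c', rfl⟩ := exists_eq_mk g
  simp only [Commute, SemiconjBy, mk_mul_mk]
  ring_nf

theorem mk_one_zero_zero_mul_mk_zero_one_zero :
    mk (1 : ZMod p) 0 0 * mk 0 1 0 = mk 0 0 1 * (mk 0 1 0 * mk 1 0 0) := by
  simp only [mk_mul_mk]
  ring_nf

section Representation

variable {k : Type*} [Field k] [IsAlgClosed k] {p : ℕ} (ρ : FDRep k (Heis p)) [Simple ρ]

theorem finrank_eq_one_of_center_acts_trivially [NeZero p] (hz : ρ.ρ (mk 0 0 1) = 1) :
    finrank k ρ = 1 := by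
  have hxy : Commute (ρ.ρ (mk 1 0 0)) (ρ.ρ (mk 0 1 0)) := by
    rw [Commute, SemiconjBy, ← map_mul, ← map_mul, mk_one_zero_zero_mul_mk_zero_one_zero,
      map_mul, hz, one_mul]
  refine ρ.finrank_eq_one_of_commute submonoid_closure_mk_eq_top ?_
  simp only [Set.mem_insert_iff, Set.mem_singleton_iff]
  rintro s (rfl | rfl | rfl) t (rfl | rfl | rfl) <;>
    simp only [hz, hxy, hxy.symm, Commute.refl, Commute.one_left, Commute.one_right]

theorem finrank_eq_of_center_acts_by_ne_one [Fact p.Prime] {c : k}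
    (hz : ρ.ρ (mk 0 0 1) = algebraMap k _ c) (hc : c ≠ 1) : finrank k ρ = p := by
  have := ρ.nontrivial_of_simple
  have hpow : ∀ {a b : ZMod p} (t : ZMod p), a * b = 0 → ρ.ρ (mk a b t) ^ p = 1 := fun t hab ↦ by
    rw [← map_pow, mk_pow_eq_one_of_mul_eq_zero t hab, map_one]
  have hcp : c ^ p = 1 := by
    have := hpow 1 (mul_zero (0 : ZMod p))
    rwa [hz, ← map_pow, ← map_one (algebraMap k (End k ρ)),
      (algebraMap k (End k ρ)).injective.eq_iff] at this
  have hprim : IsPrimitiveRoot c p := orderOf_eq_prime hcp hc ▸ IsPrimitiveRoot.orderOf c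
  have hxy : ρ.ρ (mk 1 0 0) * ρ.ρ (mk 0 1 0) = c • (ρ.ρ (mk 0 1 0) * ρ.ρ (mk 1 0 0)) := by
    rw [← map_mul, ← map_mul, mk_one_zero_zero_mul_mk_zero_one_zero, map_mul, hz, Algebra.smul_def]
  obtain ⟨W, hWp, hWx, hWy⟩ := End.exists_finrank_eq_of_mul_eq_smul_mul hprim
    (hpow 0 (mul_zero _)) (hpow 0 (zero_mul _)) hxy
  have hW : W ∈ Representation.invtSubmodule ρ.ρ :=
    Representation.mem_invtSubmodule_of_closure_eq_top ρ.ρ submonoid_closure_mk_eq_top <| by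
      simp only [Set.mem_insert_iff, Set.mem_singleton_iff, forall_eq_or_imp, forall_eq]
      exact ⟨hWx, hWy, hz ▸ End.mem_invtSubmodule_algebraMap W c⟩
  obtain hbot | htop := ρ.eq_bot_or_eq_top_of_mem_invtSubmodule hW
  · rw [hbot, finrank_bot] at hWp
    exact absurd hWp.symm (NeZero.ne p)
  · rw [← finrank_top, ← htop, hWp]

end Representation

end Heis

open Heis in
/-- Every complex irreducible representation of the Heisenberg group `H_p` has
dimension `1` or `p`. -/
theorem heis_irrep_dim_one_or_p (p : ℕ) [Fact p.Prime]
    (ρ : FDRep ℂ ↥(Heis p)) (hρ : Simple ρ) :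
    Module.finrank ℂ ρ = 1 ∨ Module.finrank ℂ ρ = p := by
  obtain ⟨c, hc⟩ := ρ.exists_eq_algebraMap_of_commute submonoid_closure_mk_eq_top
    fun g _ ↦ (commute_mk_zero_zero 1 g).map ρ.ρ
  by_cases hc1 : c = 1
  · exact .inl <| finrank_eq_one_of_center_acts_trivially ρ (by rw [hc, hc1, map_one])
  · exact .inr <| finrank_eq_of_center_acts_by_ne_one ρ hc hc1
end

section
/- Let p be a prime. The number of conjugacy classes of the Heisenberg group H_p of order p^3 over ZMod p is p^2 + p − 1. -/
open Matrix

/-!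
Model `H_p` as triples `(a, b, c)` with `(a, b, c) * (a', b', c') = (a + a', b + b', c + c' + a b')`.
Conjugating `(a, b, c)` by `(α, β, γ)` gives `(a, b, c + α b - a β)`. Over a division ring with
`q` elements the triples with `a = b = 0` are therefore central and form `q` singleton classes,
while for each of the `q ^ 2 - 1` nonzero pairs `(a, b)` the map `(α, β) ↦ α b - a β` is onto,
so the whole fibre over `(a, b)` is one class.
-/

lemma Nat.card_subtype_ne {α : Type*} [Finite α] (a : α) :
    Nat.card {x // x ≠ a} = Nat.card α - 1 := by
  classical
  have := Fintype.ofFinite α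
  simp only [Nat.card_eq_fintype_card, Fintype.card_subtype_compl, Fintype.card_subtype_eq]

@[ext]
structure Heisenberg (R : Type*) where
  a : R
  b : R
  c : R

namespace Heisenberg

section Ring

variable {R : Type*} [Ring R]

instance : Mul (Heisenberg R) := ⟨fun x y => ⟨x.a + y.a, x.b + y.b, x.c + y.c + x.a * y.b⟩⟩
instance : One (Heisenberg R) := ⟨⟨0, 0, 0⟩⟩
instance : Inv (Heisenberg R) := ⟨fun x => ⟨-x.a, -x.b, x.a * x.b - x.c⟩⟩

@[simp] lemma mul_a (x y : Heisenberg R) : (x * y).a = x.a + y.a := rfl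
@[simp] lemma mul_b (x y : Heisenberg R) : (x * y).b = x.b + y.b := rfl
@[simp] lemma mul_c (x y : Heisenberg R) : (x * y).c = x.c + y.c + x.a * y.b := rfl
@[simp] lemma one_a : (1 : Heisenberg R).a = 0 := rfl
@[simp] lemma one_b : (1 : Heisenberg R).b = 0 := rfl
@[simp] lemma one_c : (1 : Heisenberg R).c = 0 := rfl
@[simp] lemma inv_a (x : Heisenberg R) : x⁻¹.a = -x.a := rfl
@[simp] lemma inv_b (x : Heisenberg R) : x⁻¹.b = -x.b := rfl
@[simp] lemma inv_c (x : Heisenberg R) : x⁻¹.c = x.a * x.b - x.c := rfl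

instance : Group (Heisenberg R) where
  mul_assoc x y z := by ext <;> simp only [mul_a, mul_b, mul_c, mul_add, add_mul] <;> abel
  one_mul x := by ext <;> simp
  mul_one x := by ext <;> simp
  inv_mul_cancel x := by ext <;> simp

lemma conj_eq (g x : Heisenberg R) :
    g * x * g⁻¹ = ⟨x.a, x.b, x.c + g.a * x.b - x.a * g.b⟩ := by
  ext
  · simp
  · simp
  · simp only [mul_c, mul_a, inv_b, inv_c]
    noncomm_ring

lemma isConj_iff {x y : Heisenberg R} :
    IsConj x y ↔ x.a = y.a ∧ x.b = y.b ∧ ∃ α β : R, y.c = x.c + α * x.b - x.a * β := by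
  simp only [_root_.isConj_iff, conj_eq, Heisenberg.ext_iff]
  constructor
  · rintro ⟨g, ha, hb, hc⟩
    exact ⟨ha, hb, g.a, g.b, hc.symm⟩
  · rintro ⟨ha, hb, α, β, hc⟩
    exact ⟨⟨α, β, 0⟩, ha, hb, hc.symm⟩

lemma isConj_iff_eq_of_eq_zero {x y : Heisenberg R} (h : (x.a, x.b) = 0) :
    IsConj x y ↔ x = y := by
  obtain ⟨ha, hb⟩ := Prod.mk_eq_zero.mp h
  simp only [isConj_iff, ha, hb, Heisenberg.ext_iff, mul_zero, zero_mul, add_zero, sub_zero,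
    exists_const, eq_comm (a := x.c)]

def toMatrix : Heisenberg R →* Matrix (Fin 3) (Fin 3) R where
  toFun x := !![1, x.a, x.c; 0, 1, x.b; 0, 0, 1]
  map_one' := by simp [Matrix.one_fin_three]
  map_mul' x y := by
    ext i j
    fin_cases i <;> fin_cases j <;> simp [Matrix.mul_apply, Fin.sum_univ_three] <;> abel

lemma toMatrix_injective : Function.Injective (toMatrix (R := R)) := by
  intro x y h
  have h' := congrFun₂ h
  ext
  · simpa [toMatrix] using h' 0 1
  · simpa [toMatrix] using h' 1 2
  · simpa [toMatrix] using h' 0 2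

def toGL : Heisenberg R →* GL (Fin 3) R := toMatrix.toHomUnits

lemma toGL_injective : Function.Injective (toGL (R := R)) :=
  fun _ _ h => toMatrix_injective (congrArg Units.val h)

end Ring

section DivisionRing

variable {D : Type*} [DivisionRing D]

lemma isConj_iff_of_ne_zero {x y : Heisenberg D} (h : (x.a, x.b) ≠ 0) :
    IsConj x y ↔ x.a = y.a ∧ x.b = y.b := by
  rw [isConj_iff]
  refine and_congr_right fun _ => and_iff_left ?_
  by_cases hb : x.b = 0
  · have ha : x.a ≠ 0 := fun ha => h (by simp [ha, hb])
    exact ⟨0, x.a⁻¹ * (x.c - y.c), by simp [ha]⟩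
  · exact ⟨(y.c - x.c) * x.b⁻¹, 0, by simp [hb]⟩

open scoped Classical in
noncomputable def conjInvariant (x : Heisenberg D) : D ⊕ {v : D × D // v ≠ 0} :=
  if h : (x.a, x.b) = 0 then .inl x.c else .inr ⟨(x.a, x.b), h⟩

lemma isConj_iff_conjInvariant_eq {x y : Heisenberg D} :
    IsConj x y ↔ conjInvariant x = conjInvariant y := by
  by_cases hx : (x.a, x.b) = 0
  · rw [isConj_iff_eq_of_eq_zero hx]
    unfold conjInvariant
    split_ifs with hy <;> grind [Heisenberg.ext_iff]
  · rw [isConj_iff_of_ne_zero hx]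
    unfold conjInvariant
    split_ifs with hy <;> grind

lemma conjInvariant_surjective : Function.Surjective (conjInvariant (D := D)) := by
  rintro (c | ⟨⟨a, b⟩, h⟩)
  · exact ⟨⟨0, 0, c⟩, by simp [conjInvariant]⟩
  · exact ⟨⟨a, b, 0⟩, by simp [conjInvariant, h]⟩

noncomputable def conjClassesEquiv : ConjClasses (Heisenberg D) ≃ D ⊕ {v : D × D // v ≠ 0} :=
  (Quotient.congrRight fun _ _ => isConj_iff_conjInvariant_eq).trans
    (Setoid.quotientKerEquivOfSurjective _ conjInvariant_surjective)

theorem card_conjClasses [Finite D] :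
    Nat.card (ConjClasses (Heisenberg D)) = Nat.card D ^ 2 + Nat.card D - 1 := by
  have h_ne : Nat.card {v : D × D // v ≠ 0} = Nat.card D ^ 2 - 1 := by
    rw [Nat.card_subtype_ne, Nat.card_prod, sq]
  have h_pos : 0 < Nat.card D := Nat.card_pos
  rw [Nat.card_congr conjClassesEquiv, Nat.card_sum, h_ne, add_comm (Nat.card D ^ 2),
    Nat.add_sub_assoc (Nat.one_le_pow _ _ h_pos)]

end DivisionRing

lemma range_toGL (p : ℕ) : (toGL : Heisenberg (ZMod p) →* _).range = Heis p := by
  ext g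
  constructor
  · rintro ⟨x, rfl⟩
    exact ⟨x.a, x.b, x.c, rfl⟩
  · rintro ⟨a, b, c, hg⟩
    exact ⟨⟨a, b, c⟩, Units.ext hg.symm⟩

noncomputable def mulEquivHeis (p : ℕ) : Heisenberg (ZMod p) ≃* Heis p :=
  (MonoidHom.ofInjective toGL_injective).trans (MulEquiv.subgroupCongr (range_toGL p))

end Heisenberg

def MulEquiv.conjClassesCongr {G H : Type*} [Monoid G] [Monoid H] (e : G ≃* H) :
    ConjClasses G ≃ ConjClasses H where
  toFun := ConjClasses.map e
  invFun := ConjClasses.map e.symm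
  left_inv := ConjClasses.forall_isConj.2 fun x => congrArg ConjClasses.mk (e.symm_apply_apply x)
  right_inv := ConjClasses.forall_isConj.2 fun x => congrArg ConjClasses.mk (e.apply_symm_apply x)

/-- The number of conjugacy classes of the Heisenberg group `H_p` is `p^2 + p - 1`. -/
theorem heis_card_conjClasses (p : ℕ) [Fact p.Prime] :
    Nat.card (ConjClasses ↥(Heis p)) = p ^ 2 + p - 1 := by
  rw [← Nat.card_congr (Heisenberg.mulEquivHeis p).conjClassesCongr, Heisenberg.card_conjClasses,
    Nat.card_zmod]
end
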